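/- Let G be a graph and H = G[V(G) - N[core(G)]], the subgraph induced on the vertices outside the closed neighborhood of core(G). Then H has no isolated vertices. -/

import Mathlib

open Finset

variable {V : Type*} [Fintype V] [DecidableEq V]

/-  A set of vertices is stable (independent) if no two of its vertices are adjacent. -/
def stable (G : SimpleGraph V) (S : Finset V) : Prop :=
  ∀ a ∈ S, ∀ b ∈ S, ¬ G.Adj a b

/-  The (open) neighborhood of a set of vertices. -/
open Classical in
noncomputable def nbhd (G : SimpleGraph V) (A : Finset V) : Finset V :=
  Finset.univ.filter fun v => ∃ a ∈ A, G.Adj a v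

/-  The stability number: maximum size of a stable set. -/
open Classical in
noncomputable def alpha (G : SimpleGraph V) : ℕ :=
  Finset.univ.sup fun S : Finset V => if stable G S then S.card else 0

/-  A maximum stable set. -/
def maxStable (G : SimpleGraph V) (S : Finset V) : Prop :=
  stable G S ∧ S.card = alpha G

/-  core(G): the intersection of all maximum stable sets. -/
open Classical in
noncomputable def core (G : SimpleGraph V) : Finset V :=
  Finset.univ.filter fun v => ∀ S : Finset V, maxStable G S → v ∈ S

/-  A vertex is isolated if it has no neighbors. -/
def isolated (G : SimpleGraph V) (v : V) : Prop := ∀ w, ¬ G.Adj v w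

/-  The set of isolated vertices. -/
open Classical in
noncomputable def isol (G : SimpleGraph V) : Finset V :=
  Finset.univ.filter fun v => isolated G v

lemma card_le_alpha (G : SimpleGraph V) {S : Finset V} (h : stable G S) :
    S.card ≤ alpha G := by
  classical
  have := Finset.le_sup (f := fun S : Finset V => if stable G S then S.card else 0)
    (Finset.mem_univ S)
  simpa [h, alpha] using this

lemma exists_maxStable (G : SimpleGraph V) : ∃ S, maxStable G S := by
  classical
  obtain ⟨S, -, hS⟩ := Finset.exists_mem_eq_sup Finset.univ Finset.univ_nonempty
    (fun S : Finset V => if stable G S then S.card else 0)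
  by_cases h : stable G S
  · exact ⟨S, h, by rw [alpha, hS, if_pos h]⟩
  · refine ⟨∅, fun a ha => absurd ha (Finset.notMem_empty a), ?_⟩
    rw [alpha, hS, if_neg h, Finset.card_empty]

lemma core_subset_maxStable (G : SimpleGraph V) {S : Finset V} (hS : maxStable G S) :
    core G ⊆ S := by
  classical
  intro v hv
  simp only [core, Finset.mem_filter] at hv
  exact hv.2 S hS

/-  The subgraph induced on V(G) - N[core(G)] has no isolated vertices. -/
theorem stmt10 (G : SimpleGraph V) :
    ∀ v : {x : V // x ∉ core G ∪ nbhd G (core G)},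
      ¬ isolated (SimpleGraph.comap
        (Subtype.val : {x : V // x ∉ core G ∪ nbhd G (core G)} → V) G) v := by
  classical
  rintro ⟨v, hv⟩ hiso
  rw [Finset.mem_union] at hv
  push_neg at hv
  obtain ⟨hv1, hv2⟩ := hv
  -- v ∉ core: get a max stable set S missing v
  simp only [core, Finset.mem_filter, Finset.mem_univ, true_and] at hv1
  push_neg at hv1
  obtain ⟨S, hS, hvS⟩ := hv1
  -- every neighbor of v in S leads to contradiction
  have key : ∀ w ∈ S, ¬ G.Adj v w := by
    intro w hw hadj
    by_cases hwu : w ∈ core G ∪ nbhd G (core G)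
    · rw [Finset.mem_union] at hwu
      rcases hwu with hwc | hwn
      · apply hv2
        simp only [nbhd, Finset.mem_filter, Finset.mem_univ, true_and]
        exact ⟨w, hwc, hadj.symm⟩
      · simp only [nbhd, Finset.mem_filter, Finset.mem_univ, true_and] at hwn
        obtain ⟨c, hc, hcw⟩ := hwn
        exact hS.1 c (core_subset_maxStable G hS hc) w hw hcw
    · exact hiso ⟨w, hwu⟩ hadj
  -- insert v S is stable
  have hstab : stable G (insert v S) := by
    intro a ha b hb hab
    rw [Finset.mem_insert] at ha hb
    rcases ha with rfl | ha
    · rcases hb with rfl | hb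
      · exact hab.ne rfl
      · exact key b hb hab
    · rcases hb with rfl | hb
      · exact key a ha hab.symm
      · exact hS.1 a ha b hb hab
  have hcard := card_le_alpha G hstab
  rw [Finset.card_insert_of_notMem hvS, hS.2] at hcard
  omega
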